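/- arXiv:1407.3015 — 9 statements merged into one kernel-verified Lean document; each statement's English description precedes it below -/
import Mathlib

section
/- Suppose the mixed packing/covering instance (P,C) is feasible, i.e. there exists x* ∈ ℝ^n with x* ≥ 0 componentwise, C_i x* ≥ 1 for every i ∈ [m_c], and P_i x* ≤ 1 for every i ∈ [m_p]. Then for every nonnegative x ∈ ℝ^n there exists an index j ∈ [n] such that (Σ_{i∈[m_p]} P_{ij} p_i(x)) · (Σ_{i∈[m_c]} c_i(x)) ≤ (Σ_{i∈[m_c]} C_{ij} c_i(x)) · (Σ_{i∈[m_p]} p_i(x)). (Equivalently, λ*(x) := min_j (Pᵀ_j p(x))/(Cᵀ_j c(x)) ≤ |p(x)|/|c(x)|.) -/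
/-- If the mixed packing/covering instance `(P, C)` is feasible, then
for every nonnegative `x` there is a column `j` with
`(Pᵀ_j p(x)) * |c(x)| ≤ (Cᵀ_j c(x)) * |p(x)|`, i.e. `λ*(x) ≤ |p(x)|/|c(x)|`. -/
theorem packing_covering_lambda_star_le
    (mp mc n : ℕ) (hmp : 0 < mp) (hmc : 0 < mc) (hn : 0 < n)
    (P : Fin mp → Fin n → ℝ) (C : Fin mc → Fin n → ℝ)
    (hP : ∀ i j, 0 ≤ P i j) (hC : ∀ i j, 0 ≤ C i j)
    (ε : ℝ) (hε : ε ∈ Set.Ioo (0 : ℝ) 1) (U : ℝ)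
    (hfeas : ∃ xs : Fin n → ℝ, (∀ j, 0 ≤ xs j) ∧
      (∀ i, 1 ≤ ∑ j, C i j * xs j) ∧ (∀ i, ∑ j, P i j * xs j ≤ 1))
    (x : Fin n → ℝ) (hx : ∀ j, 0 ≤ x j) :
    ∃ j : Fin n,
      (∑ i, P i j * (1 + ε) ^ (∑ j', P i j' * x j')) *
        (∑ i, if (∑ j', C i j' * x j') ≤ U
              then (1 - ε) ^ (∑ j', C i j' * x j') else 0)
      ≤ (∑ i, C i j * (if (∑ j', C i j' * x j') ≤ U
              then (1 - ε) ^ (∑ j', C i j' * x j') else 0)) *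
        (∑ i, (1 + ε) ^ (∑ j', P i j' * x j')) := by
  obtain ⟨xs, hxs, hcov, hpack⟩ := hfeas
  obtain ⟨hε0, hε1⟩ := hε
  set p : Fin mp → ℝ := fun i => (1 + ε) ^ (∑ j', P i j' * x j') with hp_def
  set c : Fin mc → ℝ := fun i =>
    if (∑ j', C i j' * x j') ≤ U then (1 - ε) ^ (∑ j', C i j' * x j') else 0 with hc_def
  have hp_pos : ∀ i, 0 < p i := fun i =>
    Real.rpow_pos_of_pos (by linarith) _
  have hc_nonneg : ∀ i, 0 ≤ c i := by
    intro i
    simp only [hc_def]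
    split
    · exact le_of_lt (Real.rpow_pos_of_pos (by linarith) _)
    · exact le_refl 0
  have hpsum : (0:ℝ) ≤ ∑ i, p i := Finset.sum_nonneg fun i _ => (hp_pos i).le
  have hcsum : (0:ℝ) ≤ ∑ i, c i := Finset.sum_nonneg fun i _ => hc_nonneg i
  set A : Fin n → ℝ := fun j => ∑ i, P i j * p i with hA_def
  set B : Fin n → ℝ := fun j => ∑ i, C i j * c i with hB_def
  -- key sums
  have S1 : ∑ j, xs j * A j ≤ ∑ i, p i := by
    have : ∑ j, xs j * A j = ∑ i, p i * ∑ j, P i j * xs j := by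
      simp only [hA_def, Finset.mul_sum, Finset.sum_mul]
      rw [Finset.sum_comm]
      congr 1; ext i; congr 1; ext j; ring
    rw [this]
    calc ∑ i, p i * ∑ j, P i j * xs j ≤ ∑ i, p i * 1 :=
          Finset.sum_le_sum fun i _ => mul_le_mul_of_nonneg_left (hpack i) (hp_pos i).le
      _ = ∑ i, p i := by simp
  have S2 : ∑ i, c i ≤ ∑ j, xs j * B j := by
    have : ∑ j, xs j * B j = ∑ i, c i * ∑ j, C i j * xs j := by
      simp only [hB_def, Finset.mul_sum, Finset.sum_mul]
      rw [Finset.sum_comm]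
      congr 1; ext i; congr 1; ext j; ring
    rw [this]
    calc ∑ i, c i = ∑ i, c i * 1 := by simp
      _ ≤ ∑ i, c i * ∑ j, C i j * xs j :=
          Finset.sum_le_sum fun i _ => mul_le_mul_of_nonneg_left (hcov i) (hc_nonneg i)
  -- some xs_j > 0
  have hxs_pos : ∃ j, 0 < xs j := by
    by_contra h
    push_neg at h
    have hxz : ∀ j, xs j = 0 := fun j => le_antisymm (h j) (hxs j)
    have := hcov ⟨0, hmc⟩
    simp [hxz] at this
    linarith
  by_contra hcon
  push_neg at hcon
  -- hcon : ∀ j, B j * ∑ p < A j * ∑ c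
  have hlt : ∀ j, B j * (∑ i, p i) < A j * (∑ i, c i) := hcon
  obtain ⟨j0, hj0⟩ := hxs_pos
  have key : ∑ j, xs j * B j * (∑ i, p i) < ∑ j, xs j * A j * (∑ i, c i) := by
    apply Finset.sum_lt_sum
    · intro j _
      rcases eq_or_lt_of_le (hxs j) with h | h
      · simp [← h]
      · have := (hlt j).le
        calc xs j * B j * (∑ i, p i) = xs j * (B j * (∑ i, p i)) := by ring
          _ ≤ xs j * (A j * (∑ i, c i)) := mul_le_mul_of_nonneg_left this h.le
          _ = xs j * A j * (∑ i, c i) := by ring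
    · refine ⟨j0, Finset.mem_univ _, ?_⟩
      calc xs j0 * B j0 * (∑ i, p i) = xs j0 * (B j0 * (∑ i, p i)) := by ring
        _ < xs j0 * (A j0 * (∑ i, c i)) := by
            exact mul_lt_mul_of_pos_left (hlt j0) hj0
        _ = xs j0 * A j0 * (∑ i, c i) := by ring
  have h1 : ∑ j, xs j * A j * (∑ i, c i) ≤ (∑ i, p i) * (∑ i, c i) := by
    rw [← Finset.sum_mul]
    exact mul_le_mul_of_nonneg_right S1 hcsum
  have h2 : (∑ i, c i) * (∑ i, p i) ≤ ∑ j, xs j * B j * (∑ i, p i) := by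
    rw [← Finset.sum_mul]
    exact mul_le_mul_of_nonneg_right S2 hpsum
  nlinarith [key, h1, h2]
end

section
/- Let x* ∈ ℝ^n be a feasible solution of the covering LP, i.e. x* ≥ 0 componentwise and A_i x* ≥ 1 for every i ∈ [m]. Then for every nonnegative x ∈ ℝ^n there exists an index j ∈ [n] such that w_j · (Σ_{i∈[m]} a_i(x)) ≤ (Σ_{j'∈[n]} w_{j'} x*_{j'}) · (Σ_{i∈[m]} A_{ij} a_i(x)). (Equivalently, the optimal covering cost OPT(A,w) is at least |a(x)| · min_j w_j/(Aᵀ_j a(x)).) -/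
/-- If the covering LP `Ax ≥ 1, x ≥ 0` has a feasible solution `x*`, then
for every nonnegative `x` there is a column `j` with
`w_j * |a(x)| ≤ (w · x*) * (Aᵀ_j a(x))`, i.e. `OPT(A,w) ≥ |a(x)| * min_j w_j/(Aᵀ_j a(x))`. -/
theorem covering_lambda_star_le
    (m n : ℕ) (hm : 0 < m) (hn : 0 < n)
    (A : Fin m → Fin n → ℝ) (w : Fin n → ℝ)
    (hA : ∀ i j, 0 ≤ A i j) (hw : ∀ j, 0 ≤ w j)
    (ε : ℝ) (hε : ε ∈ Set.Ioo (0 : ℝ) 1) (U : ℝ)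
    (xs : Fin n → ℝ) (hxs : ∀ j, 0 ≤ xs j)
    (hfeas : ∀ i, 1 ≤ ∑ j, A i j * xs j)
    (x : Fin n → ℝ) (hx : ∀ j, 0 ≤ x j) :
    ∃ j : Fin n,
      w j * (∑ i, if (∑ j', A i j' * x j') ≤ U
              then (1 - ε) ^ (∑ j', A i j' * x j') else 0)
      ≤ (∑ j', w j' * xs j') *
        (∑ i, A i j * (if (∑ j', A i j' * x j') ≤ U
              then (1 - ε) ^ (∑ j', A i j' * x j') else 0)) := by
  obtain ⟨hε0, hε1⟩ := hε
  set a : Fin m → ℝ := fun i =>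
    if (∑ j', A i j' * x j') ≤ U then (1 - ε) ^ (∑ j', A i j' * x j') else 0 with ha_def
  have ha : ∀ i, 0 ≤ a i := by
    intro i
    simp only [ha_def]
    split
    · exact Real.rpow_nonneg (by linarith) _
    · exact le_refl 0
  show ∃ j, w j * (∑ i, a i) ≤ (∑ j', w j' * xs j') * (∑ i, A i j * a i)
  by_contra hcon
  push_neg at hcon
  have hi0 := hfeas ⟨0, hm⟩
  have hex : ∃ j0, 0 < xs j0 := by
    by_contra h
    push_neg at h
    have hz : ∀ j, xs j = 0 := fun j => le_antisymm (h j) (hxs j)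
    simp [hz] at hi0
    linarith
  obtain ⟨j0, hj0⟩ := hex
  set W := ∑ j', w j' * xs j' with hWdef
  have hW : 0 ≤ W := Finset.sum_nonneg fun j _ => mul_nonneg (hw j) (hxs j)
  set S := ∑ i, a i with hSdef
  have key : ∑ j, xs j * (W * ∑ i, A i j * a i) < ∑ j, xs j * (w j * S) := by
    apply Finset.sum_lt_sum
    · intro j _
      exact mul_le_mul_of_nonneg_left (hcon j).le (hxs j)
    · exact ⟨j0, Finset.mem_univ _, (mul_lt_mul_iff_right₀ hj0).mpr (hcon j0)⟩
  have lhs_eq : ∑ j, xs j * (W * ∑ i, A i j * a i)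
      = W * ∑ i, a i * ∑ j, A i j * xs j := by
    simp_rw [Finset.mul_sum]
    rw [Finset.sum_comm]
    apply Finset.sum_congr rfl
    intro i _
    apply Finset.sum_congr rfl
    intro j _
    ring
  have rhs_eq : ∑ j, xs j * (w j * S) = W * S := by
    rw [hWdef, Finset.sum_mul]
    apply Finset.sum_congr rfl
    intro j _
    ring
  have hge : W * S ≤ W * ∑ i, a i * ∑ j, A i j * xs j := by
    apply mul_le_mul_of_nonneg_left _ hW
    rw [hSdef]
    apply Finset.sum_le_sum
    intro i _
    nth_rewrite 1 [← mul_one (a i)]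
    exact mul_le_mul_of_nonneg_left (hfeas i) (ha i)
  rw [lhs_eq, rhs_eq] at key
  linarith
end

section
/- Let ι be a finite nonempty index set, let y : ι → ℝ and δ : ι → ℝ with 0 ≤ δ_i ≤ 1 for all i, and let ε ∈ (0,1]. Then (ln(Σ_{i∈ι} (1+ε)^{y_i+δ_i}) − ln(Σ_{i∈ι} (1+ε)^{y_i})) / ln(1+ε) ≤ (1+ε) · (Σ_{i∈ι} δ_i (1+ε)^{y_i}) / (Σ_{i∈ι} (1+ε)^{y_i}). In words: if each exponent increases by at most 1, the smoothed maximum lmax p(y) := log_{1+ε} Σ_i (1+ε)^{y_i} increases by at most (1+ε) times the weighted average increase Σ_i δ_i (1+ε)^{y_i} / Σ_i (1+ε)^{y_i}. -/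
/-!
Write `b = 1 + ε`. Bernoulli's inequality `b ^ δ ≤ 1 + δ ε` for `δ ∈ [0, 1]` bounds the new sum by
`S + ε D`, where `S = ∑ b ^ yᵢ` and `D = ∑ δᵢ b ^ yᵢ`. Then `log x ≤ x - 1` bounds the increase of
`log` by `ε D / S`, and `1 - b⁻¹ ≤ log b` gives `ε / log b ≤ b`.
-/

open Real Finset

lemma rpow_add_le_add_mul_rpow {ε : ℝ} (hε : -1 < ε) (y : ℝ) {δ : ℝ} (hδ0 : 0 ≤ δ)
    (hδ1 : δ ≤ 1) :
    (1 + ε) ^ (y + δ) ≤ (1 + ε) ^ y + ε * (δ * (1 + ε) ^ y) := by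
  have hb : 0 < 1 + ε := by linarith
  calc (1 + ε) ^ (y + δ) = (1 + ε) ^ y * (1 + ε) ^ δ := rpow_add hb y δ
    _ ≤ (1 + ε) ^ y * (1 + δ * ε) := by
      gcongr
      exact rpow_one_add_le_one_add_mul_self hε.le hδ0 hδ1
    _ = (1 + ε) ^ y + ε * (δ * (1 + ε) ^ y) := by ring

lemma sum_rpow_add_le_add_mul_sum {ι : Type*} (s : Finset ι) {ε : ℝ} (hε : -1 < ε)
    (y δ : ι → ℝ) (hδ0 : ∀ i ∈ s, 0 ≤ δ i) (hδ1 : ∀ i ∈ s, δ i ≤ 1) :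
    ∑ i ∈ s, (1 + ε) ^ (y i + δ i)
      ≤ ∑ i ∈ s, (1 + ε) ^ y i + ε * ∑ i ∈ s, δ i * (1 + ε) ^ y i := by
  rw [mul_sum, ← sum_add_distrib]
  exact sum_le_sum fun i hi => rpow_add_le_add_mul_rpow hε (y i) (hδ0 i hi) (hδ1 i hi)

lemma log_sub_log_le_sub_div {x y : ℝ} (hx : 0 < x) (hy : 0 < y) :
    log y - log x ≤ (y - x) / x := by
  rw [← log_div hy.ne' hx.ne', sub_div, div_self hx.ne']
  exact log_le_sub_one_of_pos (div_pos hy hx)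

lemma div_log_one_add_le {ε : ℝ} (hε : 0 < ε) : ε / log (1 + ε) ≤ 1 + ε := by
  have hb : 0 < 1 + ε := by linarith
  have hlog : 1 - (1 + ε)⁻¹ ≤ log (1 + ε) := one_sub_inv_le_log_of_pos hb
  rw [div_le_iff₀ (log_pos (by linarith))]
  calc ε = (1 + ε) * (1 - (1 + ε)⁻¹) := by field_simp; ring
    _ ≤ (1 + ε) * log (1 + ε) := by gcongr

/-- If each exponent increases by `δ_i ∈ [0,1]`, the smoothed maximum
`lmax(y) = log_{1+ε} ∑_i (1+ε)^{y_i}` increases by at most `(1+ε)` times the weighted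
average increase `∑_i δ_i (1+ε)^{y_i} / ∑_i (1+ε)^{y_i}`. -/
theorem lmax_increase_le
    (ι : Type*) [Fintype ι] [Nonempty ι]
    (y δ : ι → ℝ) (hδ0 : ∀ i, 0 ≤ δ i) (hδ1 : ∀ i, δ i ≤ 1)
    (ε : ℝ) (hε : ε ∈ Set.Ioc (0 : ℝ) 1) :
    (Real.log (∑ i, (1 + ε) ^ (y i + δ i)) - Real.log (∑ i, (1 + ε) ^ (y i)))
        / Real.log (1 + ε)
      ≤ (1 + ε) * (∑ i, δ i * (1 + ε) ^ (y i)) / (∑ i, (1 + ε) ^ (y i)) := by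
  have hε0 : 0 < ε := hε.1
  have hb : 0 < 1 + ε := by linarith
  set S := ∑ i, (1 + ε) ^ y i
  set D := ∑ i, δ i * (1 + ε) ^ y i
  have hS : 0 < S := sum_pos (fun i _ => rpow_pos_of_pos hb (y i)) univ_nonempty
  have hT : 0 < ∑ i, (1 + ε) ^ (y i + δ i) :=
    sum_pos (fun i _ => rpow_pos_of_pos hb _) univ_nonempty
  have hD : 0 ≤ D := sum_nonneg fun i _ => mul_nonneg (hδ0 i) (rpow_pos_of_pos hb (y i)).le
  have hsum := sum_rpow_add_le_add_mul_sum univ (by linarith : -1 < ε) y δ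
    (fun i _ => hδ0 i) (fun i _ => hδ1 i)
  have hlog : 0 < log (1 + ε) := log_pos (by linarith)
  calc (log (∑ i, (1 + ε) ^ (y i + δ i)) - log S) / log (1 + ε)
      ≤ ((∑ i, (1 + ε) ^ (y i + δ i) - S) / S) / log (1 + ε) := by
        gcongr
        exact log_sub_log_le_sub_div hS hT
    _ ≤ (ε * D / S) / log (1 + ε) := by gcongr; linarith
    _ = ε / log (1 + ε) * (D / S) := by ring
    _ ≤ (1 + ε) * (D / S) := by gcongr; exact div_log_one_add_le hε0
    _ = (1 + ε) * D / S := (mul_div_assoc _ _ _).symm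
end

section
/- Let ι be a finite nonempty index set, let y : ι → ℝ and δ : ι → ℝ with 0 ≤ δ_i ≤ 1 for all i, and let ε ∈ (0,1). Then (ln(Σ_{i∈ι} (1−ε)^{y_i+δ_i}) − ln(Σ_{i∈ι} (1−ε)^{y_i})) / ln(1−ε) ≥ (1−ε) · (Σ_{i∈ι} δ_i (1−ε)^{y_i}) / (Σ_{i∈ι} (1−ε)^{y_i}). In words: if each exponent increases by at most 1, the smoothed minimum lmin(y) := log_{1−ε} Σ_i (1−ε)^{y_i} increases by at least (1−ε) times the weighted average increase Σ_i δ_i (1−ε)^{y_i} / Σ_i (1−ε)^{y_i}. -/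
/-!
With `b = 1 - ε`, Bernoulli's inequality for exponents in `[0, 1]` gives
`b ^ δᵢ ≤ 1 - ε δᵢ`, so the new sum `S'` is at most `S - ε T`, where `S = ∑ b ^ yᵢ` and
`T = ∑ δᵢ b ^ yᵢ`. Hence `log S' - log S ≤ S' / S - 1 ≤ -ε T / S`, and `b - 1 ≤ b log b`
turns this into `log S' - log S ≤ b log b · T / S`; dividing by `log b < 0` gives the claim.
-/

open Finset Real

lemma rpow_le_one_sub_mul {b t : ℝ} (hb : 0 ≤ b) (ht0 : 0 ≤ t) (ht1 : t ≤ 1) :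
    b ^ t ≤ 1 - (1 - b) * t := by
  have h := rpow_one_add_le_one_add_mul_self (s := b - 1) (by linarith) ht0 ht1
  rw [add_sub_cancel] at h
  linarith

lemma sum_rpow_add_le {ι : Type*} (s : Finset ι) {b : ℝ} (hb : 0 < b) (y δ : ι → ℝ)
    (hδ0 : ∀ i ∈ s, 0 ≤ δ i) (hδ1 : ∀ i ∈ s, δ i ≤ 1) :
    ∑ i ∈ s, b ^ (y i + δ i) ≤ ∑ i ∈ s, b ^ y i - (1 - b) * ∑ i ∈ s, δ i * b ^ y i := by
  rw [mul_sum, ← sum_sub_distrib]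
  refine sum_le_sum fun i hi => ?_
  calc b ^ (y i + δ i) = b ^ y i * b ^ δ i := rpow_add hb _ _
    _ ≤ b ^ y i * (1 - (1 - b) * δ i) :=
        mul_le_mul_of_nonneg_left (rpow_le_one_sub_mul hb.le (hδ0 i hi) (hδ1 i hi))
          (rpow_nonneg hb.le _)
    _ = b ^ y i - (1 - b) * (δ i * b ^ y i) := by ring

lemma log_sub_log_le_div_sub_one {x y : ℝ} (hx : 0 < x) (hy : 0 < y) :
    log x - log y ≤ x / y - 1 := by
  rw [← log_div hx.ne' hy.ne']
  exact log_le_sub_one_of_pos (div_pos hx hy)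

lemma mul_div_le_log_sub_log_div_log {b S S' T : ℝ} (hb0 : 0 < b) (hb1 : b < 1) (hS : 0 < S)
    (hS' : 0 < S') (hT : 0 ≤ T) (h : S' ≤ S - (1 - b) * T) :
    b * T / S ≤ (log S' - log S) / log b := by
  rw [le_div_iff_of_neg (log_neg hb0 hb1)]
  calc log S' - log S ≤ S' / S - 1 := log_sub_log_le_div_sub_one hS' hS
    _ ≤ (b - 1) * (T / S) := by
        rw [div_sub_one hS.ne', mul_div_assoc', div_le_div_iff_of_pos_right hS]
        linarith
    _ ≤ b * log b * (T / S) :=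
        mul_le_mul_of_nonneg_right (self_sub_one_le_mul_log hb0.le) (div_nonneg hT hS.le)
    _ = b * T / S * log b := by ring

/-- If each exponent increases by `δ_i ∈ [0,1]`, the smoothed minimum
`lmin(y) = log_{1−ε} ∑_i (1−ε)^{y_i}` increases by at least `(1−ε)` times the weighted
average increase `∑_i δ_i (1−ε)^{y_i} / ∑_i (1−ε)^{y_i}`. -/
theorem lmin_increase_ge
    (ι : Type*) [Fintype ι] [Nonempty ι]
    (y δ : ι → ℝ) (hδ0 : ∀ i, 0 ≤ δ i) (hδ1 : ∀ i, δ i ≤ 1)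
    (ε : ℝ) (hε : ε ∈ Set.Ioo (0 : ℝ) 1) :
    (1 - ε) * (∑ i, δ i * (1 - ε) ^ (y i)) / (∑ i, (1 - ε) ^ (y i))
      ≤ (Real.log (∑ i, (1 - ε) ^ (y i + δ i)) - Real.log (∑ i, (1 - ε) ^ (y i)))
          / Real.log (1 - ε) := by
  obtain ⟨hε0, hε1⟩ := hε
  have hb : 0 < 1 - ε := by linarith
  exact mul_div_le_log_sub_log_div_log hb (by linarith)
    (sum_pos (fun i _ => rpow_pos_of_pos hb _) univ_nonempty)
    (sum_pos (fun i _ => rpow_pos_of_pos hb _) univ_nonempty)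
    (sum_nonneg fun i _ => mul_nonneg (hδ0 i) (rpow_nonneg hb.le _))
    (sum_rpow_add_le univ hb y δ (fun i _ => hδ0 i) (fun i _ => hδ1 i))
end

section
/- Let x, δ ∈ ℝ^n be nonnegative, ε ∈ (0,1), and λ₀ ≥ 0 with λ₀ · |c(x)| ≤ |p(x)|. Suppose (i) for every j ∈ [n], if δ_j > 0 then Σ_{i∈[m_p]} P_{ij} p_i(x) ≤ (1+4ε) λ₀ Σ_{i∈[m_c]} C_{ij} c_i(x), and (ii) P_i δ ≤ 1 for all i ∈ [m_p] and C_i δ ≤ 1 for all i ∈ [m_c]. Then the increase in the smoothed maximum is bounded by the increase in the smoothed minimum: log_{1+ε}|p(x+δ)| − log_{1+ε}|p(x)| ≤ ((1+ε)(1+4ε)/(1−ε)) · (log_{1−ε}|c(x+δ)| − log_{1−ε}|c(x)|). -/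
lemma rpow_le_one_add_mul_aux (b t : ℝ) (hb : 0 < b) (ht0 : 0 ≤ t) (ht1 : t ≤ 1) :
    b ^ t ≤ 1 + (b - 1) * t := by
  have h := convexOn_exp.2 (Set.mem_univ (0:ℝ)) (Set.mem_univ (Real.log b))
    (by linarith : (0:ℝ) ≤ 1 - t) ht0 (by ring)
  simp only [smul_eq_mul, mul_zero, zero_add, Real.exp_zero, Real.exp_log hb] at h
  rw [Real.rpow_def_of_pos hb]
  calc Real.exp (Real.log b * t) = Real.exp (t * Real.log b) := by ring_nf
    _ ≤ (1 - t) * 1 + t * b := h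
    _ = 1 + (b - 1) * t := by ring

lemma key_numeric (ε lam0 A B Sp Sc Lp t : ℝ) (hε0 : 0 < ε) (hε1 : ε < 1)
    (hlam0 : 0 ≤ lam0) (hA0 : 0 ≤ A) (hB0 : 0 ≤ B) (hSp : 0 < Sp) (hSc : 0 < Sc)
    (hLp : 0 < Lp) (ht : 0 < t)
    (hA : A ≤ (1 + 4*ε) * lam0 * B) (hinv : lam0 * Sc ≤ Sp)
    (hLpb : ε ≤ (1 + ε) * Lp) (hLmb : t * (1 - ε) ≤ ε) :
    ε * A / Sp / Lp ≤ ((1 + ε) * (1 + 4 * ε) / (1 - ε)) * (ε * B / Sc / t) := by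
  have h1m : (0:ℝ) < 1 - ε := by linarith
  rw [div_div, div_div, div_mul_div_comm,
    div_le_div_iff₀ (mul_pos hSp hLp) (mul_pos h1m (mul_pos hSc ht))]
  have hQ : (0:ℝ) ≤ (1 + 4*ε) * B * Sp :=
    mul_nonneg (mul_nonneg (by linarith) hB0) hSp.le
  have hASc : A * Sc ≤ (1 + 4*ε) * B * Sp := by
    calc A * Sc ≤ ((1 + 4*ε) * lam0 * B) * Sc := by nlinarith
      _ = (1 + 4*ε) * B * (lam0 * Sc) := by ring
      _ ≤ (1 + 4*ε) * B * Sp := by nlinarith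
  nlinarith [mul_le_mul_of_nonneg_left
      (mul_le_mul_of_nonneg_right hASc (mul_pos ht h1m).le) hε0.le,
    mul_le_mul_of_nonneg_left (mul_le_mul_of_nonneg_left hLmb hQ) hε0.le,
    mul_le_mul_of_nonneg_left (mul_le_mul_of_nonneg_left hLpb hQ) hε0.le]

/-- In one increment step of the packing/covering algorithm
(with `λ₀ |c(x)| ≤ |p(x)|`, increments only on columns with
`Pᵀ_j p(x) ≤ (1+4ε) λ₀ Cᵀ_j c(x)`, and `Pδ ≤ 1`, `Cδ ≤ 1`), the increase of the
smoothed maximum `log_{1+ε}|p(·)|` is at most `(1+ε)(1+4ε)/(1−ε)` times the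
increase of the smoothed minimum `log_{1−ε}|c(·)|`. -/
theorem packing_covering_increment_invariant
    (mp mc n : ℕ) (hmp : 0 < mp) (hmc : 0 < mc) (hn : 0 < n)
    (P : Fin mp → Fin n → ℝ) (C : Fin mc → Fin n → ℝ)
    (hP : ∀ i j, 0 ≤ P i j) (hC : ∀ i j, 0 ≤ C i j)
    (x δ : Fin n → ℝ) (hx : ∀ j, 0 ≤ x j) (hδ : ∀ j, 0 ≤ δ j)
    (ε : ℝ) (hε : ε ∈ Set.Ioo (0 : ℝ) 1)
    (lam0 : ℝ) (hlam0 : 0 ≤ lam0)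
    (hinv : lam0 * (∑ i, (1 - ε) ^ (∑ j, C i j * x j))
              ≤ ∑ i, (1 + ε) ^ (∑ j, P i j * x j))
    (hcols : ∀ j, 0 < δ j →
      (∑ i, P i j * (1 + ε) ^ (∑ j', P i j' * x j'))
        ≤ (1 + 4 * ε) * lam0 * (∑ i, C i j * (1 - ε) ^ (∑ j', C i j' * x j')))
    (hPδ : ∀ i, ∑ j, P i j * δ j ≤ 1)
    (hCδ : ∀ i, ∑ j, C i j * δ j ≤ 1) :
    Real.log (∑ i, (1 + ε) ^ (∑ j, P i j * (x j + δ j))) / Real.log (1 + ε)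
        - Real.log (∑ i, (1 + ε) ^ (∑ j, P i j * x j)) / Real.log (1 + ε)
      ≤ ((1 + ε) * (1 + 4 * ε) / (1 - ε)) *
        (Real.log (∑ i, (1 - ε) ^ (∑ j, C i j * (x j + δ j))) / Real.log (1 - ε)
          - Real.log (∑ i, (1 - ε) ^ (∑ j, C i j * x j)) / Real.log (1 - ε)) := by
  obtain ⟨hε0, hε1⟩ := hε
  have h1p : (0:ℝ) < 1 + ε := by linarith
  have h1m : (0:ℝ) < 1 - ε := by linarith
  set Sp := ∑ i, (1 + ε) ^ (∑ j, P i j * x j) with hSp_def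
  set Sc := ∑ i, (1 - ε) ^ (∑ j, C i j * x j) with hSc_def
  set Sp' := ∑ i, (1 + ε) ^ (∑ j, P i j * (x j + δ j)) with hSp'_def
  set Sc' := ∑ i, (1 - ε) ^ (∑ j, C i j * (x j + δ j)) with hSc'_def
  set A := ∑ i, (∑ j, P i j * δ j) * (1 + ε) ^ (∑ j, P i j * x j) with hA_def
  set B := ∑ i, (∑ j, C i j * δ j) * (1 - ε) ^ (∑ j, C i j * x j) with hB_def
  clear_value Sp Sc Sp' Sc' A B
  have hne_p : (Finset.univ : Finset (Fin mp)).Nonempty := by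
    simpa [Finset.univ_nonempty_iff] using Fin.pos_iff_nonempty.mp hmp
  have hne_c : (Finset.univ : Finset (Fin mc)).Nonempty := by
    simpa [Finset.univ_nonempty_iff] using Fin.pos_iff_nonempty.mp hmc
  have hSp_pos : 0 < Sp := by
    rw [hSp_def]; exact Finset.sum_pos (fun i _ => Real.rpow_pos_of_pos h1p _) hne_p
  have hSc_pos : 0 < Sc := by
    rw [hSc_def]; exact Finset.sum_pos (fun i _ => Real.rpow_pos_of_pos h1m _) hne_c
  have hSp'_pos : 0 < Sp' := by
    rw [hSp'_def]; exact Finset.sum_pos (fun i _ => Real.rpow_pos_of_pos h1p _) hne_p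
  have hSc'_pos : 0 < Sc' := by
    rw [hSc'_def]; exact Finset.sum_pos (fun i _ => Real.rpow_pos_of_pos h1m _) hne_c
  have hA0 : 0 ≤ A := by
    rw [hA_def]
    exact Finset.sum_nonneg fun i _ => mul_nonneg
      (Finset.sum_nonneg fun j _ => mul_nonneg (hP i j) (hδ j)) (Real.rpow_pos_of_pos h1p _).le
  have hB0 : 0 ≤ B := by
    rw [hB_def]
    exact Finset.sum_nonneg fun i _ => mul_nonneg
      (Finset.sum_nonneg fun j _ => mul_nonneg (hC i j) (hδ j)) (Real.rpow_pos_of_pos h1m _).le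
  -- Step 1: Sp' ≤ Sp + ε * A
  have hstep1 : Sp' ≤ Sp + ε * A := by
    have hterm : ∀ i : Fin mp, (1+ε) ^ (∑ j, P i j * (x j + δ j))
        ≤ (1+ε) ^ (∑ j, P i j * x j)
          + ε * ((∑ j, P i j * δ j) * (1+ε) ^ (∑ j, P i j * x j)) := by
      intro i
      have hd0 : 0 ≤ ∑ j, P i j * δ j :=
        Finset.sum_nonneg fun j _ => mul_nonneg (hP i j) (hδ j)
      have hsplit : (∑ j, P i j * (x j + δ j))
          = (∑ j, P i j * x j) + (∑ j, P i j * δ j) := by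
        rw [← Finset.sum_add_distrib]; exact Finset.sum_congr rfl fun j _ => by ring
      rw [hsplit, Real.rpow_add h1p]
      have hb := rpow_le_one_add_mul_aux (1+ε) _ h1p hd0 (hPδ i)
      have hppos := Real.rpow_pos_of_pos h1p (∑ j, P i j * x j)
      nlinarith [mul_le_mul_of_nonneg_left hb hppos.le]
    rw [hSp'_def, hSp_def, hA_def]
    calc (∑ i, (1+ε) ^ (∑ j, P i j * (x j + δ j))) ≤ ∑ i, ((1+ε) ^ (∑ j, P i j * x j)
          + ε * ((∑ j, P i j * δ j) * (1+ε) ^ (∑ j, P i j * x j))) :=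
        Finset.sum_le_sum fun i _ => hterm i
      _ = _ := by rw [Finset.sum_add_distrib, ← Finset.mul_sum]
  -- Step 2: Sc' ≤ Sc - ε * B
  have hstep2 : Sc' ≤ Sc - ε * B := by
    have hterm : ∀ i : Fin mc, (1-ε) ^ (∑ j, C i j * (x j + δ j))
        ≤ (1-ε) ^ (∑ j, C i j * x j)
          - ε * ((∑ j, C i j * δ j) * (1-ε) ^ (∑ j, C i j * x j)) := by
      intro i
      have hd0 : 0 ≤ ∑ j, C i j * δ j :=
        Finset.sum_nonneg fun j _ => mul_nonneg (hC i j) (hδ j)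
      have hsplit : (∑ j, C i j * (x j + δ j))
          = (∑ j, C i j * x j) + (∑ j, C i j * δ j) := by
        rw [← Finset.sum_add_distrib]; exact Finset.sum_congr rfl fun j _ => by ring
      rw [hsplit, Real.rpow_add h1m]
      have hb := rpow_le_one_add_mul_aux (1-ε) _ h1m hd0 (hCδ i)
      have hppos := Real.rpow_pos_of_pos h1m (∑ j, C i j * x j)
      nlinarith [mul_le_mul_of_nonneg_left hb hppos.le]
    rw [hSc'_def, hSc_def, hB_def]
    calc (∑ i, (1-ε) ^ (∑ j, C i j * (x j + δ j))) ≤ ∑ i, ((1-ε) ^ (∑ j, C i j * x j)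
          - ε * ((∑ j, C i j * δ j) * (1-ε) ^ (∑ j, C i j * x j))) :=
        Finset.sum_le_sum fun i _ => hterm i
      _ = _ := by rw [Finset.sum_sub_distrib, ← Finset.mul_sum]
  -- Step 3: A ≤ (1+4ε) λ₀ B
  have hstep3 : A ≤ (1 + 4*ε) * lam0 * B := by
    have hA' : A = ∑ j, δ j * ∑ i, P i j * (1+ε) ^ (∑ j', P i j' * x j') := by
      rw [hA_def]
      calc (∑ i, (∑ j, P i j * δ j) * (1+ε) ^ (∑ j, P i j * x j))
          = ∑ i, ∑ j, δ j * (P i j * (1+ε) ^ (∑ j', P i j' * x j')) := by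
            refine Finset.sum_congr rfl fun i _ => ?_
            rw [Finset.sum_mul]; exact Finset.sum_congr rfl fun j _ => by ring
        _ = ∑ j, δ j * ∑ i, P i j * (1+ε) ^ (∑ j', P i j' * x j') := by
            rw [Finset.sum_comm]
            exact Finset.sum_congr rfl fun j _ => by rw [Finset.mul_sum]
    have hB' : B = ∑ j, δ j * ∑ i, C i j * (1-ε) ^ (∑ j', C i j' * x j') := by
      rw [hB_def]
      calc (∑ i, (∑ j, C i j * δ j) * (1-ε) ^ (∑ j, C i j * x j))
          = ∑ i, ∑ j, δ j * (C i j * (1-ε) ^ (∑ j', C i j' * x j')) := by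
            refine Finset.sum_congr rfl fun i _ => ?_
            rw [Finset.sum_mul]; exact Finset.sum_congr rfl fun j _ => by ring
        _ = ∑ j, δ j * ∑ i, C i j * (1-ε) ^ (∑ j', C i j' * x j') := by
            rw [Finset.sum_comm]
            exact Finset.sum_congr rfl fun j _ => by rw [Finset.mul_sum]
    rw [hA', hB']
    calc (∑ j, δ j * ∑ i, P i j * (1+ε) ^ (∑ j', P i j' * x j'))
        ≤ ∑ j, δ j * ((1 + 4*ε) * lam0 * ∑ i, C i j * (1-ε) ^ (∑ j', C i j' * x j')) := by
          refine Finset.sum_le_sum fun j _ => ?_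
          rcases eq_or_lt_of_le (hδ j) with h | h
          · simp [← h]
          · exact mul_le_mul_of_nonneg_left (hcols j h) (hδ j)
      _ = (1 + 4*ε) * lam0 * ∑ j, δ j * ∑ i, C i j * (1-ε) ^ (∑ j', C i j' * x j') := by
          rw [Finset.mul_sum]; exact Finset.sum_congr rfl fun j _ => by ring
  -- log bounds
  have hlogp : Real.log Sp' - Real.log Sp ≤ ε * A / Sp := by
    rw [← Real.log_div hSp'_pos.ne' hSp_pos.ne']
    have h1 := Real.log_le_sub_one_of_pos (div_pos hSp'_pos hSp_pos)
    have h2 : Sp' / Sp - 1 ≤ ε * A / Sp := by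
      rw [div_sub_one hSp_pos.ne']
      exact div_le_div_of_nonneg_right (by linarith) hSp_pos.le
    linarith
  have hlogc : Real.log Sc' - Real.log Sc ≤ -(ε * B) / Sc := by
    rw [← Real.log_div hSc'_pos.ne' hSc_pos.ne']
    have h1 := Real.log_le_sub_one_of_pos (div_pos hSc'_pos hSc_pos)
    have h2 : Sc' / Sc - 1 ≤ -(ε * B) / Sc := by
      rw [div_sub_one hSc_pos.ne']
      exact div_le_div_of_nonneg_right (by linarith) hSc_pos.le
    linarith
  -- base log facts
  have hLp : 0 < Real.log (1 + ε) := Real.log_pos (by linarith)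
  set t := -Real.log (1 - ε) with ht_def
  clear_value t
  have ht0 : 0 < t := by
    have := Real.log_neg h1m (by linarith : 1 - ε < 1)
    simp only [ht_def]; linarith
  have hLpb : ε ≤ (1 + ε) * Real.log (1 + ε) := by
    have h := Real.log_le_sub_one_of_pos (show (0:ℝ) < (1+ε)⁻¹ by positivity)
    rw [Real.log_inv] at h
    have h2 : (1+ε) * (1+ε)⁻¹ = 1 := by field_simp
    nlinarith [mul_le_mul_of_nonneg_left h h1p.le]
  have hLmb : t * (1 - ε) ≤ ε := by
    have h := Real.log_le_sub_one_of_pos (show (0:ℝ) < (1-ε)⁻¹ by positivity)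
    rw [Real.log_inv] at h
    have h2 : (1-ε) * (1-ε)⁻¹ = 1 := by field_simp
    simp only [ht_def]
    nlinarith [mul_le_mul_of_nonneg_left h h1m.le]
  -- key numeric inequality
  have hK : (0:ℝ) < (1 + ε) * (1 + 4 * ε) / (1 - ε) := by
    exact div_pos (mul_pos h1p (by linarith)) h1m
  have key : ε * A / Sp / Real.log (1 + ε)
      ≤ ((1 + ε) * (1 + 4 * ε) / (1 - ε)) * (ε * B / Sc / t) :=
    key_numeric ε lam0 A B Sp Sc (Real.log (1 + ε)) t hε0 hε1 hlam0 hA0 hB0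
      hSp_pos hSc_pos hLp ht0 hstep3 hinv hLpb hLmb
  -- combine
  have lhs_le : Real.log Sp' / Real.log (1+ε) - Real.log Sp / Real.log (1+ε)
      ≤ ε * A / Sp / Real.log (1+ε) := by
    rw [div_sub_div_same]
    exact div_le_div_of_nonneg_right hlogp hLp.le
  have rhs_ge : ((1 + ε) * (1 + 4 * ε) / (1 - ε)) * (ε * B / Sc / t)
      ≤ ((1 + ε) * (1 + 4 * ε) / (1 - ε)) *
        (Real.log Sc' / Real.log (1-ε) - Real.log Sc / Real.log (1-ε)) := by
    apply mul_le_mul_of_nonneg_left _ hK.le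
    rw [div_sub_div_same]
    have hLm' : Real.log (1 - ε) = -t := by simp [ht_def]
    rw [hLm', div_neg]
    have h3 : (Real.log Sc' - Real.log Sc) / t ≤ -(ε * B) / Sc / t :=
      div_le_div_of_nonneg_right hlogc ht0.le
    have h4 : -(ε * B) / Sc / t = -(ε * B / Sc / t) := by ring
    linarith [h3.trans_eq h4]
  exact le_trans (le_trans lhs_le key) rhs_ge
end

section
/- Let x, δ ∈ ℝ^n be nonnegative, ε ∈ (0,1), and let x* ∈ ℝ^n satisfy x* ≥ 0 and A_i x* ≥ 1 for every i ∈ [m]. Suppose (i) A_i δ ≤ 1 for every i ∈ [m], and (ii) for every j ∈ [n], if δ_j > 0 then w_j · |a(x)| ≤ (1+4ε)(w·x*) · Σ_{i∈[m]} A_{ij} a_i(x). Then (1−ε) · Σ_{j∈[n]} w_j δ_j ≤ (1+4ε)(w·x*) · (log_{1−ε}|a(x+δ)| − log_{1−ε}|a(x)|). In words: in one increment step of the covering algorithm, the cost added is at most (1+O(ε))·OPT times the increase of the smoothed minimum of the covering constraints. -/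
/-!
Write `a_i = (1-ε)^{A_i x}`, `P = Σ a_i` and `d_i = A_i δ ∈ [0,1]`. Since `a_i(x+δ) = a_i (1-ε)^{d_i}`
and Bernoulli's inequality gives `(1-ε)^{d_i} ≤ 1 - ε d_i`, the potential drops to at most
`P (1 - ε T/P)` with `T = Σ a_i d_i`; hence `log_{1-ε}` of it rises by at least
`ε (T/P) / (-log (1-ε)) ≥ (1-ε) T/P`. On the other hand, summing the column conditions (ii)
weighted by `δ_j` gives `w·δ ≤ (1+4ε)(w·x*) · T/P`.
-/

open Finset Real

lemma one_sub_mul_le_div_log_one_sub {ε s L : ℝ} (hε0 : 0 < ε) (hε1 : ε < 1) (hs : 0 ≤ s)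
    (hL : L ≤ -(ε * s)) : (1 - ε) * s ≤ L / log (1 - ε) := by
  have hb : 0 < 1 - ε := by linarith
  rw [le_div_iff_of_neg (log_neg hb (by linarith))]
  have hlog : -ε ≤ (1 - ε) * log (1 - ε) := by
    have h := mul_le_mul_of_nonneg_left (one_sub_inv_le_log_of_pos hb) hb.le
    rwa [mul_sub, mul_inv_cancel₀ hb.ne', mul_one, sub_sub_cancel_left] at h
  nlinarith [mul_le_mul_of_nonneg_left hlog hs]

lemma log_sum_mul_one_sub_rpow_sub_log_sum_le {ι : Type*} [Fintype ι] [Nonempty ι]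
    {a d : ι → ℝ} {ε : ℝ} (hε1 : ε < 1) (ha : ∀ i, 0 < a i)
    (hd0 : ∀ i, 0 ≤ d i) (hd1 : ∀ i, d i ≤ 1) :
    log (∑ i, a i * (1 - ε) ^ d i) - log (∑ i, a i)
      ≤ -(ε * ((∑ i, a i * d i) / ∑ i, a i)) := by
  have hb : 0 < 1 - ε := by linarith
  have hP : 0 < ∑ i, a i := sum_pos (fun i _ => ha i) univ_nonempty
  have hQ : 0 < ∑ i, a i * (1 - ε) ^ d i :=
    sum_pos (fun i _ => mul_pos (ha i) (rpow_pos_of_pos hb _)) univ_nonempty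
  have hdrop : ∑ i, a i * (1 - ε) ^ d i ≤ ∑ i, a i - ε * ∑ i, a i * d i := by
    rw [mul_sum, ← sum_sub_distrib]
    refine sum_le_sum fun i _ => ?_
    have hbern : (1 + -ε) ^ d i ≤ 1 + d i * -ε :=
      rpow_one_add_le_one_add_mul_self (by linarith) (hd0 i) (hd1 i)
    rw [← sub_eq_add_neg] at hbern
    nlinarith [mul_le_mul_of_nonneg_left hbern (ha i).le]
  rw [← log_div hQ.ne' hP.ne']
  calc log ((∑ i, a i * (1 - ε) ^ d i) / ∑ i, a i)
      ≤ (∑ i, a i * (1 - ε) ^ d i) / ∑ i, a i - 1 := log_le_sub_one_of_pos (div_pos hQ hP)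
    _ ≤ (∑ i, a i - ε * ∑ i, a i * d i) / ∑ i, a i - 1 := by gcongr
    _ = -(ε * ((∑ i, a i * d i) / ∑ i, a i)) := by field_simp; ring

lemma sum_mul_mul_le_of_forall_pos {ι : Type*} [Fintype ι] {w δ g : ι → ℝ} {P C : ℝ}
    (hδ : ∀ j, 0 ≤ δ j) (h : ∀ j, 0 < δ j → w j * P ≤ C * g j) :
    (∑ j, w j * δ j) * P ≤ C * ∑ j, δ j * g j := by
  rw [sum_mul, mul_sum]
  refine sum_le_sum fun j _ => ?_
  rcases (hδ j).eq_or_lt with h0 | hpos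
  · simp [← h0]
  · nlinarith [mul_le_mul_of_nonneg_left (h j hpos) (hδ j)]

theorem covering_increment_invariant_general
    (m n : ℕ) (hm : 0 < m)
    (A : Fin m → Fin n → ℝ) (w : Fin n → ℝ)
    (hA : ∀ i j, 0 ≤ A i j) (hw : ∀ j, 0 ≤ w j)
    (x δ : Fin n → ℝ) (hδ : ∀ j, 0 ≤ δ j)
    (ε : ℝ) (hε : ε ∈ Set.Ioo (0 : ℝ) 1)
    (xs : Fin n → ℝ) (hxs : ∀ j, 0 ≤ xs j)
    (hAδ : ∀ i, ∑ j, A i j * δ j ≤ 1)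
    (hcols : ∀ j, 0 < δ j →
      w j * (∑ i, (1 - ε) ^ (∑ j', A i j' * x j'))
        ≤ (1 + 4 * ε) * (∑ j', w j' * xs j') *
            (∑ i, A i j * (1 - ε) ^ (∑ j', A i j' * x j'))) :
    (1 - ε) * (∑ j, w j * δ j)
      ≤ (1 + 4 * ε) * (∑ j', w j' * xs j') *
          (Real.log (∑ i, (1 - ε) ^ (∑ j, A i j * (x j + δ j))) / Real.log (1 - ε)
            - Real.log (∑ i, (1 - ε) ^ (∑ j, A i j * x j)) / Real.log (1 - ε)) := by
  obtain ⟨hε0, hε1⟩ := hε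
  have : Nonempty (Fin m) := ⟨⟨0, hm⟩⟩
  have hb : 0 < 1 - ε := by linarith
  set a : Fin m → ℝ := fun i => (1 - ε) ^ (∑ j, A i j * x j)
  set d : Fin m → ℝ := fun i => ∑ j, A i j * δ j
  set C := (1 + 4 * ε) * ∑ j, w j * xs j
  have hd0 : ∀ i, 0 ≤ d i := fun i => sum_nonneg fun j _ => mul_nonneg (hA i j) (hδ j)
  have hP : 0 < ∑ i, a i := sum_pos (fun i _ => rpow_pos_of_pos hb _) univ_nonempty
  have hC : 0 ≤ C := mul_nonneg (by linarith) (sum_nonneg fun j _ => mul_nonneg (hw j) (hxs j))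
  have hnext : ∑ i, (1 - ε) ^ (∑ j, A i j * (x j + δ j)) = ∑ i, a i * (1 - ε) ^ d i := by
    simp only [a, d, mul_add, sum_add_distrib, rpow_add hb]
  have hcost : ∑ j, w j * δ j ≤ C * ((∑ i, a i * d i) / ∑ i, a i) := by
    have hswap : ∑ j, δ j * ∑ i, A i j * a i = ∑ i, a i * d i := by
      simp only [d, mul_sum]
      rw [sum_comm]
      exact sum_congr rfl fun _ _ => sum_congr rfl fun _ _ => by ring
    have h := sum_mul_mul_le_of_forall_pos (g := fun j => ∑ i, A i j * a i) hδ hcols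
    rwa [hswap, ← le_div_iff₀ hP, mul_div_assoc] at h
  rw [hnext, div_sub_div_same]
  calc (1 - ε) * ∑ j, w j * δ j ≤ (1 - ε) * (C * ((∑ i, a i * d i) / ∑ i, a i)) := by gcongr
    _ = C * ((1 - ε) * ((∑ i, a i * d i) / ∑ i, a i)) := by ring
    _ ≤ C * ((log (∑ i, a i * (1 - ε) ^ d i) - log (∑ i, a i)) / log (1 - ε)) := by
      gcongr
      exact one_sub_mul_le_div_log_one_sub hε0 hε1
        (div_nonneg (sum_nonneg fun i _ => mul_nonneg (rpow_pos_of_pos hb _).le (hd0 i)) hP.le)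
        (log_sum_mul_one_sub_rpow_sub_log_sum_le hε1
          (fun i => rpow_pos_of_pos hb _) hd0 hAδ)

/-- In one increment step of the covering algorithm, the cost added is
at most `(1+4ε)·(w·x*)/(1−ε)` times the increase of the smoothed minimum
`log_{1−ε}|a(·)|`, i.e.
`(1−ε)·(w·δ) ≤ (1+4ε)(w·x*)·(log_{1−ε}|a(x+δ)| − log_{1−ε}|a(x)|)`. -/
theorem covering_increment_invariant
    (m n : ℕ) (hm : 0 < m) (hn : 0 < n)
    (A : Fin m → Fin n → ℝ) (w : Fin n → ℝ)
    (hA : ∀ i j, 0 ≤ A i j) (hw : ∀ j, 0 ≤ w j)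
    (x δ : Fin n → ℝ) (hx : ∀ j, 0 ≤ x j) (hδ : ∀ j, 0 ≤ δ j)
    (ε : ℝ) (hε : ε ∈ Set.Ioo (0 : ℝ) 1)
    (xs : Fin n → ℝ) (hxs : ∀ j, 0 ≤ xs j)
    (hfeas : ∀ i, 1 ≤ ∑ j, A i j * xs j)
    (hAδ : ∀ i, ∑ j, A i j * δ j ≤ 1)
    (hcols : ∀ j, 0 < δ j →
      w j * (∑ i, (1 - ε) ^ (∑ j', A i j' * x j'))
        ≤ (1 + 4 * ε) * (∑ j', w j' * xs j') *
            (∑ i, A i j * (1 - ε) ^ (∑ j', A i j' * x j'))) :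
    (1 - ε) * (∑ j, w j * δ j)
      ≤ (1 + 4 * ε) * (∑ j', w j' * xs j') *
          (Real.log (∑ i, (1 - ε) ^ (∑ j, A i j * (x j + δ j))) / Real.log (1 - ε)
            - Real.log (∑ i, (1 - ε) ^ (∑ j, A i j * x j)) / Real.log (1 - ε)) :=
  covering_increment_invariant_general m n hm A w hA hw x δ hδ ε hε xs hxs hAδ hcols
end

section
/- Let x ∈ ℝ^n be nonnegative, ε ∈ (0, 1/10], λ₀ ≥ 0, and suppose for every i that P̂_i ∈ (P_i x − 1, P_i x] and Ĉ_i ∈ (C_i x − 1, C_i x], with p̂_i = (1+ε)^{P̂_i} and ĉ_i = (1−ε)^{Ĉ_i}. Fix j ∈ [n] with C_{ij} > 0 for some i. If Σ_{i∈[m_p]} P_{ij} p̂_i ≤ ((1+ε)²/(1−ε)) λ₀ Σ_{i∈[m_c]} C_{ij} ĉ_i, then Σ_{i∈[m_p]} P_{ij} p_i(x) ≤ (1+7ε) λ₀ Σ_{i∈[m_c]} C_{ij} c_i(x). In words: if the algorithm's estimated ratio test passes with threshold (1+ε)²λ₀/(1−ε), then the true ratio λ(x,j) is at most (1+7ε)λ₀.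 -/
/-! The estimates `P̂ᵢ`, `Ĉᵢ` are off by less than one unit in the exponent, so each packing
weight `pᵢ(x)` exceeds its estimate by at most a factor `1 + ε` and each covering weight `cᵢ(x)`
is at least `1 - ε` times its estimate. The passed test therefore bounds the true ratio by
`(1 + ε)³ / (1 - ε)² · λ₀`, and `(1 + ε)³ ≤ (1 + 7ε)(1 - ε)²` for `ε ≤ 1/10`. -/

open Finset

namespace Real

lemma rpow_le_mul_rpow_of_le_add_one {b s t : ℝ} (hb : 1 ≤ b) (hst : s ≤ t + 1) :
    b ^ s ≤ b * b ^ t :=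
  calc b ^ s ≤ b ^ (t + 1) := rpow_le_rpow_of_exponent_le hb hst
    _ = b * b ^ t := by rw [rpow_add_one (by positivity), mul_comm]

lemma mul_rpow_le_rpow_of_le_add_one {a s t : ℝ} (ha₀ : 0 < a) (ha₁ : a ≤ 1) (hst : s ≤ t + 1) :
    a * a ^ t ≤ a ^ s :=
  calc a * a ^ t = a ^ (t + 1) := by rw [rpow_add_one ha₀.ne', mul_comm]
    _ ≤ a ^ s := rpow_le_rpow_of_exponent_ge ha₀ ha₁ hst

variable {ι : Type*} (s : Finset ι) {w u v : ι → ℝ}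

lemma sum_mul_rpow_le_mul_sum_mul_rpow {b : ℝ} (hb : 1 ≤ b) (hw : ∀ i ∈ s, 0 ≤ w i)
    (huv : ∀ i ∈ s, u i ≤ v i + 1) :
    ∑ i ∈ s, w i * b ^ u i ≤ b * ∑ i ∈ s, w i * b ^ v i := by
  rw [mul_sum]
  refine sum_le_sum fun i hi => ?_
  calc w i * b ^ u i ≤ w i * (b * b ^ v i) :=
        mul_le_mul_of_nonneg_left (rpow_le_mul_rpow_of_le_add_one hb (huv i hi)) (hw i hi)
    _ = b * (w i * b ^ v i) := by ring

lemma mul_sum_mul_rpow_le_sum_mul_rpow {a : ℝ} (ha₀ : 0 < a) (ha₁ : a ≤ 1)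
    (hw : ∀ i ∈ s, 0 ≤ w i) (huv : ∀ i ∈ s, u i ≤ v i + 1) :
    a * ∑ i ∈ s, w i * a ^ v i ≤ ∑ i ∈ s, w i * a ^ u i := by
  rw [mul_sum]
  refine sum_le_sum fun i hi => ?_
  calc a * (w i * a ^ v i) = w i * (a * a ^ v i) := by ring
    _ ≤ w i * a ^ u i :=
        mul_le_mul_of_nonneg_left (mul_rpow_le_rpow_of_le_add_one ha₀ ha₁ (huv i hi)) (hw i hi)

end Real

lemma one_add_pow_three_div_one_sub_sq_le {ε : ℝ} (hε₀ : 0 ≤ ε) (hε : ε ≤ 1 / 10) :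
    (1 + ε) ^ 3 / (1 - ε) ^ 2 ≤ 1 + 7 * ε := by
  rw [div_le_iff₀ (by nlinarith)]
  nlinarith [sq_nonneg ε]

theorem estimated_ratio_test_sound_general
    (mp mc n : ℕ)
    (P : Fin mp → Fin n → ℝ) (C : Fin mc → Fin n → ℝ)
    (hP : ∀ i j, 0 ≤ P i j) (hC : ∀ i j, 0 ≤ C i j)
    (x : Fin n → ℝ)
    (ε : ℝ) (hε : ε ∈ Set.Ioc (0 : ℝ) (1 / 10))
    (lam0 : ℝ) (hlam0 : 0 ≤ lam0)
    (Ph : Fin mp → ℝ) (Ch : Fin mc → ℝ)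
    (hPh : ∀ i, (∑ j, P i j * x j) - 1 < Ph i ∧ Ph i ≤ ∑ j, P i j * x j)
    (hCh : ∀ i, (∑ j, C i j * x j) - 1 < Ch i ∧ Ch i ≤ ∑ j, C i j * x j)
    (j : Fin n)
    (htest : (∑ i, P i j * (1 + ε) ^ (Ph i))
      ≤ ((1 + ε) ^ 2 / (1 - ε)) * lam0 * (∑ i, C i j * (1 - ε) ^ (Ch i))) :
    (∑ i, P i j * (1 + ε) ^ (∑ j', P i j' * x j'))
      ≤ (1 + 7 * ε) * lam0 * (∑ i, C i j * (1 - ε) ^ (∑ j', C i j' * x j')) := by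
  obtain ⟨hε₀, hε⟩ := hε
  have hpacking : ∑ i, P i j * (1 + ε) ^ (∑ j', P i j' * x j')
      ≤ (1 + ε) * ∑ i, P i j * (1 + ε) ^ Ph i :=
    Real.sum_mul_rpow_le_mul_sum_mul_rpow univ (by linarith) (fun i _ => hP i j)
      (fun i _ => by linarith [(hPh i).1])
  have hcovering : (1 - ε) * ∑ i, C i j * (1 - ε) ^ Ch i
      ≤ ∑ i, C i j * (1 - ε) ^ (∑ j', C i j' * x j') :=
    Real.mul_sum_mul_rpow_le_sum_mul_rpow univ (by linarith) (by linarith) (fun i _ => hC i j)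
      (fun i _ => by linarith [(hCh i).1])
  have hCh_nonneg : 0 ≤ ∑ i, C i j * (1 - ε) ^ Ch i :=
    sum_nonneg fun i _ => mul_nonneg (hC i j) (Real.rpow_nonneg (by linarith) _)
  have hε₁ : 1 - ε ≠ 0 := by linarith
  calc _ ≤ (1 + ε) * ∑ i, P i j * (1 + ε) ^ Ph i := hpacking
    _ ≤ (1 + ε) * ((1 + ε) ^ 2 / (1 - ε) * lam0 * ∑ i, C i j * (1 - ε) ^ Ch i) := by
        gcongr
    _ = (1 + ε) ^ 3 / (1 - ε) ^ 2 * lam0 * ((1 - ε) * ∑ i, C i j * (1 - ε) ^ Ch i) := by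
        field_simp
    _ ≤ (1 + 7 * ε) * lam0 * ∑ i, C i j * (1 - ε) ^ (∑ j', C i j' * x j') := by
        gcongr
        · exact mul_nonneg (by linarith) hCh_nonneg
        · exact one_add_pow_three_div_one_sub_sq_le hε₀.le hε

/-- If the estimated ratio test passes with threshold
`(1+ε)² λ₀ / (1−ε)`, then the true ratio `λ(x,j)` is at most `(1+7ε) λ₀`. -/
theorem estimated_ratio_test_sound
    (mp mc n : ℕ) (hmp : 0 < mp) (hmc : 0 < mc) (hn : 0 < n)
    (P : Fin mp → Fin n → ℝ) (C : Fin mc → Fin n → ℝ)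
    (hP : ∀ i j, 0 ≤ P i j) (hC : ∀ i j, 0 ≤ C i j)
    (x : Fin n → ℝ) (hx : ∀ j, 0 ≤ x j)
    (ε : ℝ) (hε : ε ∈ Set.Ioc (0 : ℝ) (1 / 10))
    (lam0 : ℝ) (hlam0 : 0 ≤ lam0)
    (Ph : Fin mp → ℝ) (Ch : Fin mc → ℝ)
    (hPh : ∀ i, (∑ j, P i j * x j) - 1 < Ph i ∧ Ph i ≤ ∑ j, P i j * x j)
    (hCh : ∀ i, (∑ j, C i j * x j) - 1 < Ch i ∧ Ch i ≤ ∑ j, C i j * x j)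
    (j : Fin n) (hj : ∃ i, 0 < C i j)
    (htest : (∑ i, P i j * (1 + ε) ^ (Ph i))
      ≤ ((1 + ε) ^ 2 / (1 - ε)) * lam0 * (∑ i, C i j * (1 - ε) ^ (Ch i))) :
    (∑ i, P i j * (1 + ε) ^ (∑ j', P i j' * x j'))
      ≤ (1 + 7 * ε) * lam0 * (∑ i, C i j * (1 - ε) ^ (∑ j', C i j' * x j')) :=
  estimated_ratio_test_sound_general mp mc n P C hP hC x ε hε lam0 hlam0 Ph Ch hPh hCh j htest
end

section
/- Let (F, C, f, c) be a facility-location instance with C nonempty, and let x' : F × 𝒫(C) → ℝ be a feasible solution of the Hochbaum set-cover LP: x'_{j,S} ≥ 0 for all j ∈ F and S ⊆ C, and Σ_{j∈F} Σ_{S⊆C : i∈S} x'_{j,S} ≥ 1 for every i ∈ C. Define x_{ij} = Σ_{S⊆C : i∈S} x'_{j,S} and y_j = max_{i∈C} x_{ij}. Then (x, y) is a feasible solution of the facility-location LP (x_{ij} ≥ 0, Σ_{j∈F} x_{ij} ≥ 1 for every i, y_j ≥ x_{ij} for all i,j), and its cost satisfies Σ_{j∈F} f_j y_j + Σ_{i∈C,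 j∈F} c_{ij} x_{ij} ≤ Σ_{j∈F} Σ_{S⊆C} x'_{j,S} · (f_j + Σ_{i∈S} c_{ij}). -/
open Finset

/-! Writing `x_{ij} = ∑_{S ∋ i} x'_{j,S}`, the assignment cost `∑_i c_{ij} x_{ij}` is exactly
`∑_S x'_{j,S} ∑_{i ∈ S} c_{ij}` after exchanging the order of summation, while
`y_j = max_i x_{ij} ≤ ∑_S x'_{j,S}` because `x' ≥ 0`; so each facility's share of the
facility-location cost is bounded by its share of the set-cover cost. -/

section SetSums

variable {α : Type*} [Fintype α] [DecidableEq α]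

theorem sum_mul_sum_filter_mem {R : Type*} [CommSemiring R] (c : α → R) (w : Finset α → R) :
    ∑ i, c i * ∑ S ∈ univ.filter (fun S => i ∈ S), w S = ∑ S, w S * ∑ i ∈ S, c i := by
  simp_rw [mul_sum]
  rw [sum_comm' (t' := univ) (s' := fun S => S)]
  · exact sum_congr rfl fun S _ => sum_congr rfl fun i _ => mul_comm _ _
  · simp

theorem sup'_sum_filter_mem_le_sum [Nonempty α] (w : Finset α → ℝ) (hw : ∀ S, 0 ≤ w S) :
    univ.sup' univ_nonempty (fun i : α => ∑ S ∈ univ.filter (fun S => i ∈ S), w S)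
      ≤ ∑ S, w S :=
  sup'_le _ _ fun _ _ =>
    sum_le_sum_of_subset_of_nonneg (filter_subset _ _) fun S _ _ => hw S

theorem facility_cost_le_set_cover_cost [Nonempty α] (a : ℝ) (ha : 0 ≤ a) (c : α → ℝ)
    (w : Finset α → ℝ) (hw : ∀ S, 0 ≤ w S) :
    a * univ.sup' univ_nonempty (fun i : α => ∑ S ∈ univ.filter (fun S => i ∈ S), w S)
        + ∑ i, c i * ∑ S ∈ univ.filter (fun S => i ∈ S), w S
      ≤ ∑ S, w S * (a + ∑ i ∈ S, c i) :=
  calc _ ≤ a * ∑ S, w S + ∑ S, w S * ∑ i ∈ S, c i := by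
        rw [sum_mul_sum_filter_mem]
        gcongr
        exact sup'_sum_filter_mem_le_sum w hw
    _ = ∑ S, w S * (a + ∑ i ∈ S, c i) := by
        rw [mul_sum, ← sum_add_distrib]
        exact sum_congr rfl fun S _ => by ring

end SetSums

theorem hochbaum_to_facility_location_general
    (F C : Type*) [Fintype F] [Fintype C] [DecidableEq C] [Nonempty C]
    (f : F → ℝ) (c : C → F → ℝ)
    (hf : ∀ j, 0 ≤ f j)
    (x' : F → Finset C → ℝ)
    (hx' : ∀ j S, 0 ≤ x' j S)
    (hcov : ∀ i : C, 1 ≤ ∑ j, ∑ S ∈ Finset.univ.filter (fun S => i ∈ S), x' j S) :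
    (∀ i : C, ∀ j : F,
        0 ≤ ∑ S ∈ Finset.univ.filter (fun S => i ∈ S), x' j S) ∧
    (∀ i : C, 1 ≤ ∑ j, ∑ S ∈ Finset.univ.filter (fun S => i ∈ S), x' j S) ∧
    (∀ i : C, ∀ j : F,
        (∑ S ∈ Finset.univ.filter (fun S => i ∈ S), x' j S)
          ≤ Finset.univ.sup' Finset.univ_nonempty
              (fun i' : C => ∑ S ∈ Finset.univ.filter (fun S => i' ∈ S), x' j S)) ∧
    (∑ j, f j * Finset.univ.sup' Finset.univ_nonempty
          (fun i : C => ∑ S ∈ Finset.univ.filter (fun S => i ∈ S), x' j S)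
        + ∑ i, ∑ j, c i j * ∑ S ∈ Finset.univ.filter (fun S => i ∈ S), x' j S
      ≤ ∑ j, ∑ S : Finset C, x' j S * (f j + ∑ i ∈ S, c i j)) := by
  refine ⟨fun i j => sum_nonneg fun S _ => hx' j S, hcov,
    fun i j => le_sup' (fun i' : C => ∑ S ∈ univ.filter (fun S => i' ∈ S), x' j S) (mem_univ i),
    ?_⟩
  rw [sum_comm (s := univ (α := C)), ← sum_add_distrib]
  exact sum_le_sum fun j _ =>
    facility_cost_le_set_cover_cost (f j) (hf j) (fun i => c i j) (x' j) (hx' j)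

/-- From a feasible solution `x'` of the Hochbaum set-cover LP, the pair
`x_{ij} = ∑_{S ∋ i} x'_{j,S}`, `y_j = max_i x_{ij}` is a feasible facility-location
LP solution of no greater cost. -/
theorem hochbaum_to_facility_location
    (F C : Type*) [Fintype F] [Fintype C] [DecidableEq C] [Nonempty C]
    (f : F → ℝ) (c : C → F → ℝ)
    (hf : ∀ j, 0 ≤ f j) (hc : ∀ i j, 0 ≤ c i j)
    (x' : F → Finset C → ℝ)
    (hx' : ∀ j S, 0 ≤ x' j S)
    (hcov : ∀ i : C, 1 ≤ ∑ j, ∑ S ∈ Finset.univ.filter (fun S => i ∈ S), x' j S) :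
    (∀ i : C, ∀ j : F,
        0 ≤ ∑ S ∈ Finset.univ.filter (fun S => i ∈ S), x' j S) ∧
    (∀ i : C, 1 ≤ ∑ j, ∑ S ∈ Finset.univ.filter (fun S => i ∈ S), x' j S) ∧
    (∀ i : C, ∀ j : F,
        (∑ S ∈ Finset.univ.filter (fun S => i ∈ S), x' j S)
          ≤ Finset.univ.sup' Finset.univ_nonempty
              (fun i' : C => ∑ S ∈ Finset.univ.filter (fun S => i' ∈ S), x' j S)) ∧
    (∑ j, f j * Finset.univ.sup' Finset.univ_nonempty
          (fun i : C => ∑ S ∈ Finset.univ.filter (fun S => i ∈ S), x' j S)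
        + ∑ i, ∑ j, c i j * ∑ S ∈ Finset.univ.filter (fun S => i ∈ S), x' j S
      ≤ ∑ j, ∑ S : Finset C, x' j S * (f j + ∑ i ∈ S, c i j)) :=
  hochbaum_to_facility_location_general F C f c hf x' hx' hcov
end

section
/- Let (F, C, f, c) be a facility-location instance with F and C nonempty, and let (x*, y*) be a feasible solution of the facility-location LP (x*_{ij} ≥ 0, Σ_{j∈F} x*_{ij} ≥ 1 for every i ∈ C, y*_j ≥ x*_{ij} for all i,j) of cost OPT* = Σ_{j∈F} f_j y*_j + Σ_{i,j} c_{ij} x*_{ij}. Fix ε ∈ (0,1), a threshold U ∈ ℝ, and any nonnegative x : C × F → ℝ; let A_i x = Σ_{j∈F} x_{ij}, and a_i(x) = (1−ε)^{A_i x} if A_i x ≤ U and 0 otherwise. Then there exist a facility j ∈ F and a subset S ⊆ C such that (f_j + Σ_{i∈S} c_{ij}) · (Σ_{i∈C} a_i(x)) ≤ OPT* · (Σ_{i∈S} a_i(x)). (Equivalently, min over stars (j,S) of λ(x,j,S) = (f_j + Σ_{i∈S} c_{ij})/Σ_{i∈S} a_i(x) is at most OPT*/|a(x)|.) -/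
open Finset

theorem fl_aux
    (F C : Type*) [Fintype F] [Fintype C] [Nonempty C]
    (f : F → ℝ) (c : C → F → ℝ)
    (hf : ∀ j, 0 ≤ f j) (hc : ∀ i j, 0 ≤ c i j)
    (xs : C → F → ℝ) (ys : F → ℝ)
    (hxs : ∀ i j, 0 ≤ xs i j)
    (hcov : ∀ i, 1 ≤ ∑ j, xs i j)
    (hyx : ∀ i j, xs i j ≤ ys j)
    (a : C → ℝ) (ha : ∀ i, 0 ≤ a i) :
    ∃ (j : F) (S : Finset C),
      (f j + ∑ i ∈ S, c i j) * (∑ i, a i)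
        ≤ (∑ j', f j' * ys j' + ∑ i, ∑ j', c i j' * xs i j') * (∑ i ∈ S, a i) := by
  set T := ∑ i, a i with hTdef
  set OPT := ∑ j', f j' * ys j' + ∑ i, ∑ j', c i j' * xs i j' with hOPTdef
  have hys : ∀ j, 0 ≤ ys j := fun j => (hxs (Classical.arbitrary C) j).trans (hyx _ j)
  have hTnn : 0 ≤ T := Finset.sum_nonneg fun i _ => ha i
  have hOPT : 0 ≤ OPT :=
    add_nonneg (Finset.sum_nonneg fun j _ => mul_nonneg (hf j) (hys j))
      (Finset.sum_nonneg fun i _ => Finset.sum_nonneg fun j _ => mul_nonneg (hc i j) (hxs i j))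
  by_contra hcon
  push_neg at hcon
  -- hcon : ∀ j S, OPT * ∑ i ∈ S, a i < (f j + ∑ i ∈ S, c i j) * T
  set Sj : F → Finset C := fun j => Finset.univ.filter (fun i => 0 ≤ OPT * a i - T * c i j)
    with hSjdef
  have key1 : ∀ j, ∑ i, xs i j * (OPT * a i - T * c i j)
      ≤ ys j * (OPT * ∑ i ∈ Sj j, a i - T * ∑ i ∈ Sj j, c i j) := by
    intro j
    have h1 : ∑ i, xs i j * (OPT * a i - T * c i j)
        ≤ ∑ i, (if 0 ≤ OPT * a i - T * c i j then ys j * (OPT * a i - T * c i j) else 0) := by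
      apply Finset.sum_le_sum
      intro i _
      split_ifs with h
      · exact mul_le_mul_of_nonneg_right (hyx i j) h
      · exact mul_nonpos_of_nonneg_of_nonpos (hxs i j) (le_of_not_ge h)
    have h2 : ∑ i, (if 0 ≤ OPT * a i - T * c i j then ys j * (OPT * a i - T * c i j) else 0)
        = ys j * (OPT * ∑ i ∈ Sj j, a i - T * ∑ i ∈ Sj j, c i j) := by
      rw [← Finset.sum_filter]
      simp only [hSjdef]
      rw [Finset.mul_sum, Finset.mul_sum, ← Finset.sum_sub_distrib, ← Finset.mul_sum]
    linarith [h1, h2.le, h2.ge]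
  have key2 : ∀ j, OPT * ∑ i ∈ Sj j, a i - T * ∑ i ∈ Sj j, c i j < f j * T := by
    intro j
    have := hcon j (Sj j)
    nlinarith [this]
  -- find j0 with ys j0 > 0
  obtain ⟨j0, hj0⟩ : ∃ j0, 0 < ys j0 := by
    by_contra hno
    push_neg at hno
    have i0 := Classical.arbitrary C
    have h1 := hcov i0
    have h2 : ∑ j, xs i0 j ≤ 0 :=
      Finset.sum_nonpos fun j _ => (hyx i0 j).trans (hno j)
    linarith
  have key : ∀ j ∈ Finset.univ (α := F),
      ∑ i, xs i j * (OPT * a i - T * c i j) ≤ ys j * (f j * T) := by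
    intro j _
    exact (key1 j).trans (mul_le_mul_of_nonneg_left (key2 j).le (hys j))
  have keystrict : ∑ i, xs i j0 * (OPT * a i - T * c i j0) < ys j0 * (f j0 * T) :=
    lt_of_le_of_lt (key1 j0) (mul_lt_mul_of_pos_left (key2 j0) hj0)
  have hsum : ∑ j, ∑ i, xs i j * (OPT * a i - T * c i j) < ∑ j, ys j * (f j * T) := by
    apply Finset.sum_lt_sum key ⟨j0, Finset.mem_univ _, keystrict⟩
  have hRHS : ∑ j, ys j * (f j * T) = T * ∑ j', f j' * ys j' := by
    rw [Finset.mul_sum]; apply Finset.sum_congr rfl; intros; ring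
  have hLHS : ∑ j, ∑ i, xs i j * (OPT * a i - T * c i j)
      = OPT * (∑ i, a i * ∑ j, xs i j) - T * ∑ i, ∑ j', c i j' * xs i j' := by
    rw [Finset.sum_comm, Finset.mul_sum, Finset.mul_sum, ← Finset.sum_sub_distrib]
    apply Finset.sum_congr rfl
    intro i _
    rw [Finset.mul_sum, Finset.mul_sum, Finset.mul_sum, ← Finset.sum_sub_distrib]
    apply Finset.sum_congr rfl
    intro j _
    ring
  have hcover : T ≤ ∑ i, a i * ∑ j, xs i j := by
    rw [hTdef]
    apply Finset.sum_le_sum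
    intro i _
    nlinarith [ha i, hcov i]
  have h1 : OPT * T ≤ OPT * (∑ i, a i * ∑ j, xs i j) :=
    mul_le_mul_of_nonneg_left hcover hOPT
  rw [hLHS, hRHS] at hsum
  nlinarith [hsum, h1]

/-- For any feasible facility-location LP solution `(x*, y*)` of cost
`OPT*` and any nonnegative `x`, there is a star `(j, S)` with
`(f_j + ∑_{i∈S} c_{ij}) · |a(x)| ≤ OPT* · ∑_{i∈S} a_i(x)`, i.e.
`min_{(j,S)} λ(x,j,S) ≤ OPT*/|a(x)|`. -/
theorem facility_location_lambda_star_le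
    (F C : Type*) [Fintype F] [Fintype C] [Nonempty F] [Nonempty C]
    (f : F → ℝ) (c : C → F → ℝ)
    (hf : ∀ j, 0 ≤ f j) (hc : ∀ i j, 0 ≤ c i j)
    (xs : C → F → ℝ) (ys : F → ℝ)
    (hxs : ∀ i j, 0 ≤ xs i j)
    (hcov : ∀ i, 1 ≤ ∑ j, xs i j)
    (hyx : ∀ i j, xs i j ≤ ys j)
    (ε : ℝ) (hε : ε ∈ Set.Ioo (0 : ℝ) 1) (U : ℝ)
    (x : C → F → ℝ) (hx : ∀ i j, 0 ≤ x i j) :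
    ∃ (j : F) (S : Finset C),
      (f j + ∑ i ∈ S, c i j) *
          (∑ i : C, if (∑ j', x i j') ≤ U then (1 - ε) ^ (∑ j', x i j') else 0)
        ≤ (∑ j', f j' * ys j' + ∑ i, ∑ j', c i j' * xs i j') *
          (∑ i ∈ S, if (∑ j', x i j') ≤ U then (1 - ε) ^ (∑ j', x i j') else 0) := by
  have ha : ∀ i : C, 0 ≤ (if (∑ j', x i j') ≤ U then (1 - ε) ^ (∑ j', x i j') else 0 : ℝ) := by
    intro i
    split_ifs
    · exact (Real.rpow_pos_of_pos (by linarith [hε.2]) _).le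
    · exact le_refl 0
  simpa using fl_aux F C f c hf hc xs ys hxs hcov hyx
    (fun i => if (∑ j', x i j') ≤ U then (1 - ε) ^ (∑ j', x i j') else 0) ha
end
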